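/- Restricted ML solution: with K₂₂ = U₂ᵀXAXᵀU₂ + σ²·1 and L₂(X,A,σ²) = log det K₂₂ + tr(K₂₂⁻¹C₂₂), the minimizer over X with XᵀZ = 0 and orthonormal columns, A diagonal positive semi-definite, and σ² > 0, is X̂ = U₂W_p, Â = diag(λ₁ − σ̂², ..., λ_p − σ̂²), σ̂² = (1/(n−d−p)) Σ_{j=p+1}^{n−d} λ_j, where λ₁ ≥ ... ≥ λ_{n−d} are the eigenvalues of C₂₂ = U₂ᵀCU₂ with orthonormal eigenvectors w_j and W_p = (w₁,...,w_p), provided λ_p > λ_j for some j > p. -/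

import Mathlib

/-!
Since `Xᵀ Z = 0`, the columns of `M = U₂ᵀ X` are orthonormal, so the model covariance
`M A Mᵀ + σ² 1` equals `Q diag(k) Qᵀ` for an orthogonal `Q` and a decreasing vector `k` whose
entries beyond the first `p` equal `σ²`. With `V = Qᵀ W`, the trace term is
`∑ᵢⱼ Vᵢⱼ² λⱼ / kᵢ`; the matrix `(Vᵢⱼ²)` is doubly stochastic, so Birkhoff's theorem and the
rearrangement inequality bound it below by `∑ᵢ λᵢ / kᵢ`. What remains, `∑ᵢ (log kᵢ + λᵢ / kᵢ)`,
is minimised termwise by `kᵢ = λᵢ` for `i < p` and, for the common value `σ²` of the other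
entries, by their mean `σ̂²`; this is the value attained at `(X̂, Â, σ̂²)`.
-/

open Matrix

noncomputable def negLogLik {m : ℕ} (K C : Matrix (Fin m) (Fin m) ℝ) : ℝ :=
  Real.log K.det + (K⁻¹ * C).trace

open scoped BigOperators

lemma one_add_log_le_log_add_div {k l : ℝ} (hk : 0 < k) (hl : 0 < l) :
    1 + Real.log l ≤ Real.log k + l / k := by
  have h := Real.log_le_sub_one_of_pos (div_pos hl hk)
  rw [Real.log_div hl.ne' hk.ne'] at h
  linarith

lemma sum_log_add_div_expect_le {ι : Type*} {s : Finset ι} (hs : s.Nonempty) {l : ι → ℝ}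
    (hl : ∀ i ∈ s, 0 < l i) {σ : ℝ} (hσ : 0 < σ) :
    ∑ i ∈ s, (Real.log (𝔼 j ∈ s, l j) + l i / 𝔼 j ∈ s, l j) ≤
      ∑ i ∈ s, (Real.log σ + l i / σ) := by
  have hm : 0 < 𝔼 j ∈ s, l j := Finset.expect_pos hl hs
  simp only [Finset.sum_add_distrib, ← Finset.sum_div, Finset.sum_const, nsmul_eq_mul,
    ← Finset.card_mul_expect s l, mul_div_assoc, div_self hm.ne']
  rw [← mul_add, ← mul_add, add_comm _ 1]
  exact mul_le_mul_of_nonneg_left (one_add_log_le_log_add_div hσ hm) (Nat.cast_nonneg _)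

lemma sum_log_add_div_le_of_eqOn {κ : Type*} [Fintype κ] [DecidableEq κ] {s : Finset κ}
    (hs : s.Nonempty) {l k khat : κ → ℝ} (hl : ∀ i, 0 < l i) (hk : ∀ i, 0 < k i) {σ : ℝ}
    (hks : ∀ i ∈ s, k i = σ) (hkhat_mem : ∀ i ∈ s, khat i = 𝔼 j ∈ s, l j)
    (hkhat_not_mem : ∀ i ∉ s, khat i = l i) :
    ∑ i, (Real.log (khat i) + l i / khat i) ≤ ∑ i, (Real.log (k i) + l i / k i) := by
  rw [← Finset.sum_compl_add_sum s, ← Finset.sum_compl_add_sum s]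
  refine add_le_add (Finset.sum_le_sum fun i hi => ?_) ?_
  · rw [hkhat_not_mem i (Finset.mem_compl.mp hi), div_self (hl i).ne', add_comm]
    exact one_add_log_le_log_add_div (hk i) (hl i)
  · obtain ⟨i₀, hi₀⟩ := hs
    calc ∑ i ∈ s, (Real.log (khat i) + l i / khat i)
        = ∑ i ∈ s, (Real.log (𝔼 j ∈ s, l j) + l i / 𝔼 j ∈ s, l j) :=
          Finset.sum_congr rfl fun i hi => by rw [hkhat_mem i hi]
      _ ≤ ∑ i ∈ s, (Real.log σ + l i / σ) :=
          sum_log_add_div_expect_le ⟨i₀, hi₀⟩ (fun i _ => hl i) (hks i₀ hi₀ ▸ hk i₀)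
      _ = ∑ i ∈ s, (Real.log (k i) + l i / k i) :=
          Finset.sum_congr rfl fun i hi => by rw [hks i hi]

lemma sq_mem_doublyStochastic {n : Type*} [Fintype n] [DecidableEq n] {V : Matrix n n ℝ}
    (hV : Vᵀ * V = 1) : Matrix.of (fun i j => V i j ^ 2) ∈ doublyStochastic ℝ n := by
  have hV' : V * Vᵀ = 1 := mul_eq_one_comm.mp hV
  refine mem_doublyStochastic_iff_sum.mpr ⟨fun i j => sq_nonneg _, fun i => ?_, fun j => ?_⟩
  · simpa [sq, mul_apply] using congrFun (congrFun hV' i) i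
  · simpa [sq, mul_apply] using congrFun (congrFun hV j) j

lemma dotProduct_le_dotProduct_mulVec_of_mem_doublyStochastic {n : Type*} [Fintype n]
    [DecidableEq n] {c l : n → ℝ} (hcl : Antivary c l) {D : Matrix n n ℝ}
    (hD : D ∈ doublyStochastic ℝ n) : c ⬝ᵥ l ≤ c ⬝ᵥ D *ᵥ l := by
  rw [← SetLike.mem_coe, doublyStochastic_eq_convexHull_permMatrix] at hD
  have hlin : IsLinearMap ℝ fun D : Matrix n n ℝ => c ⬝ᵥ D *ᵥ l :=
    ⟨fun A B => by simp [add_mulVec, dotProduct_add],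
      fun r A => by simp [smul_mulVec, dotProduct_smul]⟩
  refine convexHull_min ?_ (convex_halfSpace_ge hlin _) hD
  rintro _ ⟨σ, rfl⟩
  change c ⬝ᵥ l ≤ c ⬝ᵥ _
  rw [permMatrix_mulVec]
  exact hcl.sum_mul_le_sum_mul_comp_perm

lemma negLogLik_conj {m : ℕ} {Q : Matrix (Fin m) (Fin m) ℝ} (hQ : Qᵀ * Q = 1)
    (K S : Matrix (Fin m) (Fin m) ℝ) :
    negLogLik (Q * K * Qᵀ) (Q * S * Qᵀ) = negLogLik K S := by
  have hQ' : Q * Qᵀ = 1 := mul_eq_one_comm.mp hQ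
  have hdet : (Q * K * Qᵀ).det = K.det := by
    rw [det_mul, det_mul, mul_comm Q.det, mul_assoc, ← det_mul, hQ', det_one, mul_one]
  have hinv : (Q * K * Qᵀ)⁻¹ = Q * K⁻¹ * Qᵀ := by
    rw [Matrix.mul_inv_rev, Matrix.mul_inv_rev, inv_eq_left_inv hQ, inv_eq_left_inv hQ', mul_assoc]
  have hprod : Q * K⁻¹ * Qᵀ * (Q * S * Qᵀ) = Q * (K⁻¹ * S) * Qᵀ := by
    simp only [Matrix.mul_assoc, ← Matrix.mul_assoc Qᵀ Q, hQ, Matrix.one_mul]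
  rw [negLogLik, negLogLik, hdet, hinv, hprod, trace_mul_cycle, hQ, Matrix.one_mul]

lemma negLogLik_diagonal {m : ℕ} {k : Fin m → ℝ} (hk : ∀ i, 0 < k i)
    (S : Matrix (Fin m) (Fin m) ℝ) :
    negLogLik (diagonal k) S = ∑ i, (Real.log (k i) + S i i / k i) := by
  have hinv : (diagonal k)⁻¹ = diagonal k⁻¹ := by
    refine inv_eq_left_inv ?_
    rw [diagonal_mul_diagonal, ← diagonal_one]
    exact congrArg diagonal (funext fun i => inv_mul_cancel₀ (hk i).ne')
  rw [negLogLik, det_diagonal, Real.log_prod fun i _ => (hk i).ne', hinv, trace,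
    ← Finset.sum_add_distrib]
  simp [diagonal_mul, div_eq_inv_mul]

lemma negLogLik_diagonal_diagonal {m : ℕ} {k : Fin m → ℝ} (hk : ∀ i, 0 < k i)
    (l : Fin m → ℝ) :
    negLogLik (diagonal k) (diagonal l) = ∑ i, (Real.log (k i) + l i / k i) := by
  simp only [negLogLik_diagonal hk, diagonal_apply_eq]

lemma mul_diagonal_mul_transpose_apply_self {n : Type*} [Fintype n] [DecidableEq n]
    (V : Matrix n n ℝ) (l : n → ℝ) (i : n) :
    (V * diagonal l * Vᵀ) i i = (Matrix.of (fun i j => V i j ^ 2) *ᵥ l) i := by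
  rw [mul_apply]
  simp only [mul_diagonal, transpose_apply, mulVec, dotProduct, of_apply]
  exact Finset.sum_congr rfl fun j _ => by ring

lemma negLogLik_diagonal_le_conj {m : ℕ} {k l : Fin m → ℝ} (hk : ∀ i, 0 < k i)
    (hk_anti : Antitone k) (hl_anti : Antitone l) {V : Matrix (Fin m) (Fin m) ℝ}
    (hV : Vᵀ * V = 1) :
    negLogLik (diagonal k) (diagonal l) ≤ negLogLik (diagonal k) (V * diagonal l * Vᵀ) := by
  have hanti : Antivary k⁻¹ l :=
    Monotone.antivary (fun i j hij => inv_anti₀ (hk j) (hk_anti hij)) hl_anti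
  have key := dotProduct_le_dotProduct_mulVec_of_mem_doublyStochastic hanti
    (sq_mem_doublyStochastic hV)
  simp only [negLogLik_diagonal hk, Finset.sum_add_distrib, mul_diagonal_mul_transpose_apply_self,
    diagonal_apply_eq]
  simpa [dotProduct, div_eq_inv_mul] using key

lemma negLogLik_diagonal_le_of_orthogonal {m : ℕ} {k l : Fin m → ℝ} (hk : ∀ i, 0 < k i)
    (hk_anti : Antitone k) (hl_anti : Antitone l) {Q W : Matrix (Fin m) (Fin m) ℝ}
    (hQ : Qᵀ * Q = 1) (hW : Wᵀ * W = 1) :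
    negLogLik (diagonal k) (diagonal l) ≤
      negLogLik (Q * diagonal k * Qᵀ) (W * diagonal l * Wᵀ) := by
  have hQ' : Q * Qᵀ = 1 := mul_eq_one_comm.mp hQ
  have hconj : W * diagonal l * Wᵀ = Q * ((Qᵀ * W) * diagonal l * (Qᵀ * W)ᵀ) * Qᵀ := by
    simp only [transpose_mul, transpose_transpose, ← Matrix.mul_assoc, hQ', Matrix.one_mul]
    simp only [Matrix.mul_assoc, hQ', Matrix.mul_one]
  have hV : (Qᵀ * W)ᵀ * (Qᵀ * W) = 1 := by
    rw [transpose_mul, transpose_transpose, Matrix.mul_assoc, ← Matrix.mul_assoc Q, hQ',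
      Matrix.one_mul, hW]
  rw [hconj, negLogLik_conj hQ]
  exact negLogLik_diagonal_le_conj hk hk_anti hl_anti hV

lemma exists_orthogonal_extension {κ ι : Type*} [Fintype κ] [DecidableEq κ] [Fintype ι]
    [DecidableEq ι] {M : Matrix κ ι ℝ} (hM : Mᵀ * M = 1) {f : ι → κ} (hf : f.Injective) :
    ∃ Q : Matrix κ κ ℝ, Qᵀ * Q = 1 ∧ ∀ x j, Q x (f j) = M x j := by
  let col : ι → EuclideanSpace ℝ κ := fun j => WithLp.toLp 2 fun x => M x j
  have hcol : Orthonormal ℝ col := by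
    rw [orthonormal_iff_ite]
    intro i j
    simpa [col, PiLp.inner_apply, mul_apply, one_apply, mul_comm] using congrFun (congrFun hM i) j
  have hrestrict : (Set.range f).domRestrict (Function.extend f col 0) =
      col ∘ (Equiv.ofInjective f hf).symm := by
    ext ⟨_, j, rfl⟩ : 1
    simp [hf.extend_apply]
  obtain ⟨b, hb⟩ := Orthonormal.exists_orthonormalBasis_extension_of_card_eq
    (finrank_euclideanSpace (𝕜 := ℝ) (ι := κ)) (v := Function.extend f col 0)
    (hrestrict ▸ hcol.comp _ (Equiv.injective _))
  refine ⟨(EuclideanSpace.basisFun κ ℝ).toBasis.toMatrix b, ?_, fun x j => ?_⟩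
  · simpa [conjTranspose_eq_transpose_of_trivial] using
      (EuclideanSpace.basisFun κ ℝ).toMatrix_orthonormalBasis_conjTranspose_mul_self b
  · simp [Module.Basis.toMatrix_apply, hb (f j) ⟨j, rfl⟩, hf.extend_apply, col]

lemma transpose_mul_self_submatrix {m ι ι' : Type*} [Fintype m] [DecidableEq ι]
    [DecidableEq ι'] {M : Matrix m ι ℝ} (hM : Mᵀ * M = 1) {f : ι' → ι} (hf : f.Injective) :
    (M.submatrix id f)ᵀ * M.submatrix id f = 1 := by
  rw [transpose_submatrix, ← submatrix_mul _ _ _ _ _ Function.bijective_id, hM,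
    submatrix_one _ hf]

lemma submatrix_mul_diagonal_mul_transpose {m ι : Type*} [Fintype ι] [DecidableEq ι]
    (M : Matrix m ι ℝ) (τ : Equiv.Perm ι) (a : ι → ℝ) :
    M.submatrix id τ * diagonal (a ∘ τ) * (M.submatrix id τ)ᵀ = M * diagonal a * Mᵀ := by
  ext x y
  rw [mul_apply, mul_apply]
  simp only [mul_diagonal, transpose_apply, submatrix_apply, id, Function.comp_apply]
  exact Equiv.sum_comp τ fun j => M x j * a j * M y j

lemma mul_diagonal_mul_transpose_eq_extend {m κ ι : Type*} [Fintype κ] [Fintype ι]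
    [DecidableEq κ] [DecidableEq ι] {Q : Matrix m κ ℝ} {M : Matrix m ι ℝ} {f : ι → κ}
    (hf : f.Injective) (hQM : ∀ x j, Q x (f j) = M x j) (a : ι → ℝ) :
    M * diagonal a * Mᵀ = Q * diagonal (Function.extend f a 0) * Qᵀ := by
  ext x y
  rw [mul_apply, mul_apply]
  simp only [mul_diagonal, transpose_apply]
  refine Fintype.sum_of_injective f hf _ _ (fun i hi => ?_) fun j => ?_
  · rw [Function.extend_apply' _ _ _ fun ⟨j, hj⟩ => hi ⟨j, hj⟩, Pi.zero_apply, mul_zero,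
      zero_mul]
  · rw [hf.extend_apply, hQM, hQM]

lemma conj_diagonal_add_smul_one {n : Type*} [Fintype n] [DecidableEq n] {Q : Matrix n n ℝ}
    (hQ : Q * Qᵀ = 1) (v : n → ℝ) (σ : ℝ) :
    Q * diagonal v * Qᵀ + σ • 1 = Q * diagonal (fun i => v i + σ) * Qᵀ := by
  rw [show diagonal (fun i => v i + σ) = diagonal v + σ • 1 by
      rw [smul_one_eq_diagonal, diagonal_add],
    Matrix.mul_add, Matrix.add_mul, Matrix.mul_smul, Matrix.smul_mul, Matrix.mul_one, hQ]

lemma exists_antitone_comp_perm {p : ℕ} (a : Fin p → ℝ) :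
    ∃ τ : Equiv.Perm (Fin p), Antitone (a ∘ τ) :=
  ⟨Tuple.sort (OrderDual.toDual ∘ a), fun _ _ hij => Tuple.monotone_sort (OrderDual.toDual ∘ a) hij⟩

lemma extend_castLE_apply {p e : ℕ} (h : p ≤ e) (b : Fin p → ℝ) (x : Fin e) :
    Function.extend (Fin.castLE h) b 0 x = if hx : (x : ℕ) < p then b ⟨x, hx⟩ else 0 := by
  split_ifs with hx
  · exact (Fin.castLE_injective h).extend_apply b 0 ⟨x, hx⟩
  · exact Function.extend_apply' _ _ _ fun ⟨j, hj⟩ => hx (hj ▸ j.2)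

lemma antitone_extend_castLE {p e : ℕ} (h : p ≤ e) {b : Fin p → ℝ} (hb : Antitone b)
    (hb0 : ∀ j, 0 ≤ b j) : Antitone (Function.extend (Fin.castLE h) b 0) := by
  intro x y hxy
  rw [extend_castLE_apply, extend_castLE_apply]
  split_ifs with hy hx hx
  · exact hb (Fin.le_def.mpr hxy)
  · exact (hx (lt_of_le_of_lt (Fin.le_def.mp hxy) hy)).elim
  · exact hb0 _
  · rfl

lemma exists_conj_diagonal_of_orthonormal {e p : ℕ} (hpe : p ≤ e)
    {M : Matrix (Fin e) (Fin p) ℝ} (hM : Mᵀ * M = 1) {a : Fin p → ℝ} (ha : ∀ j, 0 ≤ a j)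
    (σ : ℝ) :
    ∃ Q : Matrix (Fin e) (Fin e) ℝ, Qᵀ * Q = 1 ∧ ∃ k : Fin e → ℝ, Antitone k ∧
      (∀ i, σ ≤ k i) ∧ (∀ i : Fin e, p ≤ (i : ℕ) → k i = σ) ∧
      M * diagonal a * Mᵀ + σ • 1 = Q * diagonal k * Qᵀ := by
  obtain ⟨τ, hτ⟩ := exists_antitone_comp_perm a
  obtain ⟨Q, hQ, hQM⟩ := exists_orthogonal_extension
    (transpose_mul_self_submatrix hM τ.injective) (Fin.castLE_injective hpe)
  refine ⟨Q, hQ, fun i => Function.extend (Fin.castLE hpe) (a ∘ τ) 0 i + σ,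
    (antitone_extend_castLE hpe hτ fun j => ha _).add_const σ, fun i => ?_, fun i hi => ?_, ?_⟩
  · simp only [extend_castLE_apply]
    split_ifs
    · exact le_add_of_nonneg_left (ha _)
    · rw [zero_add]
  · simp only [extend_castLE_apply, dif_neg (not_lt.mpr hi), zero_add]
  · rw [← submatrix_mul_diagonal_mul_transpose M τ a,
      mul_diagonal_mul_transpose_eq_extend (Fin.castLE_injective hpe) hQM,
      conj_diagonal_add_smul_one (mul_eq_one_comm.mp hQ)]

lemma exists_sum_log_add_div_le_negLogLik {e p : ℕ} (hpe : p ≤ e)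
    {M : Matrix (Fin e) (Fin p) ℝ} (hM : Mᵀ * M = 1) {a : Fin p → ℝ} (ha : ∀ j, 0 ≤ a j)
    {σ : ℝ} (hσ : 0 < σ) {W : Matrix (Fin e) (Fin e) ℝ} (hW : Wᵀ * W = 1) {l : Fin e → ℝ}
    (hl : Antitone l) :
    ∃ k : Fin e → ℝ, (∀ i, 0 < k i) ∧ (∀ i : Fin e, p ≤ (i : ℕ) → k i = σ) ∧
      ∑ i, (Real.log (k i) + l i / k i) ≤
        negLogLik (M * diagonal a * Mᵀ + σ • 1) (W * diagonal l * Wᵀ) := by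
  obtain ⟨Q, hQ, k, hk_anti, hσk, hkσ, hK⟩ := exists_conj_diagonal_of_orthonormal hpe hM ha σ
  have hk : ∀ i, 0 < k i := fun i => hσ.trans_le (hσk i)
  refine ⟨k, hk, hkσ, ?_⟩
  rw [← negLogLik_diagonal_diagonal hk, hK]
  exact negLogLik_diagonal_le_of_orthogonal hk hk_anti hl hQ hW

lemma transpose_mul_self_of_complement {n m o q : Type*} [Fintype n] [Fintype m] [DecidableEq m]
    [Fintype o] [DecidableEq n] {Z : Matrix n m ℝ} {U : Matrix n o ℝ} {X : Matrix n q ℝ}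
    (hcomplete : Z * (Zᵀ * Z)⁻¹ * Zᵀ + U * Uᵀ = 1) (hXZ : Xᵀ * Z = 0) :
    (Uᵀ * X)ᵀ * (Uᵀ * X) = Xᵀ * X := by
  have hUU : U * Uᵀ = 1 - Z * (Zᵀ * Z)⁻¹ * Zᵀ := eq_sub_of_add_eq' hcomplete
  rw [transpose_mul, transpose_transpose, Matrix.mul_assoc, ← Matrix.mul_assoc U, hUU,
    Matrix.sub_mul, Matrix.one_mul, Matrix.mul_sub, Matrix.mul_assoc, Matrix.mul_assoc,
    ← Matrix.mul_assoc Xᵀ, hXZ]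
  simp

lemma pos_of_conj_eq_conj_diagonal {n m : Type*} [Fintype n] [Fintype m] [DecidableEq m]
    {C : Matrix n n ℝ} (hC : C.PosDef) {U : Matrix n m ℝ} (hU : Uᵀ * U = 1)
    {W : Matrix m m ℝ} (hW : Wᵀ * W = 1) {l : m → ℝ}
    (hspec : Uᵀ * C * U = W * diagonal l * Wᵀ) (i : m) : 0 < l i := by
  have hUW : (U * W)ᵀ * (U * W) = 1 := by
    rw [transpose_mul, Matrix.mul_assoc, ← Matrix.mul_assoc Uᵀ, hU, Matrix.one_mul, hW]
  have hinj : Function.Injective (U * W).mulVec := fun x y hxy => by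
    simpa only [mulVec_mulVec, hUW, one_mulVec] using congrArg ((U * W)ᵀ *ᵥ ·) hxy
  have hdiag : (U * W)ᴴ * C * (U * W) = diagonal l := by
    rw [conjTranspose_eq_transpose_of_trivial, transpose_mul,
      show Wᵀ * Uᵀ * C * (U * W) = Wᵀ * (Uᵀ * C * U) * W by simp only [Matrix.mul_assoc], hspec]
    simp only [← Matrix.mul_assoc, hW, Matrix.one_mul]
    simp only [Matrix.mul_assoc, hW, Matrix.mul_one]
  have := hC.conjTranspose_mul_mul_same hinj
  rw [hdiag, posDef_diagonal_iff] at this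
  exact this i

def flattenTail {e : ℕ} (p : ℕ) (σ : ℝ) (l : Fin e → ℝ) : Fin e → ℝ :=
  fun i => if p ≤ (i : ℕ) then σ else l i

lemma submatrix_castLE_mul_diagonal_mul_transpose_add_smul_one {e p : ℕ} (hpe : p ≤ e)
    {W : Matrix (Fin e) (Fin e) ℝ} (hW : W * Wᵀ = 1) (l : Fin e → ℝ) (σ : ℝ) :
    W.submatrix id (Fin.castLE hpe) * diagonal (fun j => l (Fin.castLE hpe j) - σ) *
        (W.submatrix id (Fin.castLE hpe))ᵀ + σ • 1 = W * diagonal (flattenTail p σ l) * Wᵀ := by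
  rw [mul_diagonal_mul_transpose_eq_extend (Q := W) (M := W.submatrix id (Fin.castLE hpe))
      (Fin.castLE_injective hpe) fun _ _ => rfl,
    conj_diagonal_add_smul_one hW]
  congr 3 with i
  rw [extend_castLE_apply, flattenTail]
  split_ifs with hi hi'
  · omega
  · simp
  · simp
  · omega

lemma negLogLik_flattenTail {e : ℕ} (p : ℕ) {W : Matrix (Fin e) (Fin e) ℝ} (hW : Wᵀ * W = 1)
    {l : Fin e → ℝ} (hl : ∀ i, 0 < l i) {σ : ℝ} (hσ : 0 < σ) :
    negLogLik (W * diagonal (flattenTail p σ l) * Wᵀ) (W * diagonal l * Wᵀ) =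
      ∑ i, (Real.log (flattenTail p σ l i) + l i / flattenTail p σ l i) := by
  have hpos : ∀ i, 0 < flattenTail p σ l i := fun i => by
    unfold flattenTail; split_ifs; exacts [hσ, hl i]
  rw [negLogLik_conj hW, negLogLik_diagonal_diagonal hpos]

lemma transpose_mul_mul_eq_mul_mul_transpose {n m q : Type*} [Fintype n] [Fintype q]
    (U : Matrix n m ℝ) (X : Matrix n q ℝ) (D : Matrix q q ℝ) :
    Uᵀ * (X * D * Xᵀ) * U = (Uᵀ * X) * D * (Uᵀ * X)ᵀ := by
  simp only [transpose_mul, transpose_transpose, Matrix.mul_assoc]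

lemma card_filter_le_val {e p : ℕ} (hpe : p < e) :
    ((Finset.univ.filter fun j : Fin e => p ≤ (j : ℕ)).card : ℝ) = e - p := by
  rw [show (Finset.univ.filter fun j : Fin e => p ≤ (j : ℕ)) = Finset.Ici ⟨p, hpe⟩ by
    ext; simp [Fin.le_def], Fin.card_Ici, Nat.cast_sub hpe.le]

/-- Restricted maximum-likelihood solution for the latent variables: with
`K₂₂ = U₂ᵀXAXᵀU₂ + σ²·1` and `L₂ = log det K₂₂ + tr(K₂₂⁻¹C₂₂)`, the minimizer over `X`
with `XᵀZ = 0` and orthonormal columns, `A` diagonal psd, `σ² > 0`, is `X̂ = U₂W_p`,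
`Â = diag(λ₁−σ̂²,...,λ_p−σ̂²)`, `σ̂² = (1/(n−d−p))∑_{j>p} λ_j`, where `λ` are the sorted
eigenvalues of `C₂₂ = U₂ᵀCU₂` with orthonormal eigenvector matrix `W`. -/
theorem stmt15 {d e p : ℕ} (hpe : p < e)
    (Z : Matrix (Fin (d + e)) (Fin d) ℝ) (U₂ : Matrix (Fin (d + e)) (Fin e) ℝ)
    (hU2 : U₂ᵀ * U₂ = 1) (hU2Z : U₂ᵀ * Z = 0)
    (hcomplete : Z * (Zᵀ * Z)⁻¹ * Zᵀ + U₂ * U₂ᵀ = 1)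
    (C : Matrix (Fin (d + e)) (Fin (d + e)) ℝ) (hC : C.PosDef)
    (l : Fin e → ℝ) (W : Matrix (Fin e) (Fin e) ℝ)
    (hlanti : Antitone l) (hW : Wᵀ * W = 1)
    (hspec : U₂ᵀ * C * U₂ = W * Matrix.diagonal l * Wᵀ) :
    let C₂₂ : Matrix (Fin e) (Fin e) ℝ := U₂ᵀ * C * U₂
    let σh : ℝ := (∑ j ∈ Finset.univ.filter (fun j : Fin e => p ≤ (j : ℕ)), l j) / (e - p)
    let Wp : Matrix (Fin e) (Fin p) ℝ := fun i j => W i ⟨j.1, lt_trans j.2 hpe⟩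
    let Xh : Matrix (Fin (d + e)) (Fin p) ℝ := U₂ * Wp
    let ah : Fin p → ℝ := fun j => l ⟨j.1, lt_trans j.2 hpe⟩ - σh
    Xhᵀ * Xh = 1 ∧ Xhᵀ * Z = 0 ∧ (∀ j, 0 ≤ ah j) ∧
      ∀ (X : Matrix (Fin (d + e)) (Fin p) ℝ) (a : Fin p → ℝ) (σ2 : ℝ),
        Xᵀ * X = 1 → Xᵀ * Z = 0 → (∀ j, 0 ≤ a j) → 0 < σ2 →
        negLogLik (U₂ᵀ * (Xh * Matrix.diagonal ah * Xhᵀ) * U₂ + σh • 1) C₂₂ ≤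
          negLogLik (U₂ᵀ * (X * Matrix.diagonal a * Xᵀ) * U₂ + σ2 • 1) C₂₂ := by
  intro C₂₂ σh Wp Xh ah
  have hC₂₂ : C₂₂ = W * diagonal l * Wᵀ := hspec
  have hl : ∀ i, 0 < l i := pos_of_conj_eq_conj_diagonal hC hU2 hW hspec
  set s := Finset.univ.filter fun j : Fin e => p ≤ (j : ℕ)
  have hs : s.Nonempty := ⟨⟨p, hpe⟩, Finset.mem_filter.mpr ⟨Finset.mem_univ _, le_rfl⟩⟩
  have hσh : σh = 𝔼 j ∈ s, l j := by rw [Finset.expect_eq_sum_div_card, card_filter_le_val hpe]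
  have hσh_pos : 0 < σh := hσh ▸ Finset.expect_pos (fun i _ => hl i) hs
  have hah : ∀ j, 0 ≤ ah j := fun j => sub_nonneg.mpr <| hσh ▸ Finset.expect_le hs
    fun i hi => hlanti (Fin.le_def.mpr ((Finset.mem_filter.mp hi).2.trans' j.2.le))
  have hU2Xh : U₂ᵀ * Xh = Wp := by rw [← Matrix.mul_assoc, hU2, Matrix.one_mul]
  refine ⟨?_, by rw [transpose_mul, Matrix.mul_assoc, hU2Z, Matrix.mul_zero], hah,
    fun X a σ2 hX hXZ ha hσ2 => ?_⟩
  · rw [transpose_mul, Matrix.mul_assoc, ← Matrix.mul_assoc U₂ᵀ, hU2, Matrix.one_mul]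
    exact transpose_mul_self_submatrix hW (Fin.castLE_injective hpe.le)
  obtain ⟨k, hk, hkσ, hle⟩ := exists_sum_log_add_div_le_negLogLik hpe.le
    ((transpose_mul_self_of_complement hcomplete hXZ).trans hX) ha hσ2 hW hlanti
  calc negLogLik (U₂ᵀ * (Xh * diagonal ah * Xhᵀ) * U₂ + σh • 1) C₂₂
      = negLogLik (W * diagonal (flattenTail p σh l) * Wᵀ) (W * diagonal l * Wᵀ) := by
        rw [transpose_mul_mul_eq_mul_mul_transpose, hU2Xh, ← hC₂₂]
        exact congrArg (negLogLik · C₂₂) (submatrix_castLE_mul_diagonal_mul_transpose_add_smul_one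
          hpe.le (mul_eq_one_comm.mp hW) l σh)
    _ = ∑ i, (Real.log (flattenTail p σh l i) + l i / flattenTail p σh l i) :=
        negLogLik_flattenTail p hW hl hσh_pos
    _ ≤ ∑ i, (Real.log (k i) + l i / k i) :=
        sum_log_add_div_le_of_eqOn hs hl hk (fun i hi => hkσ i (Finset.mem_filter.mp hi).2)
          (fun i hi => (if_pos (Finset.mem_filter.mp hi).2).trans hσh)
          (fun i hi => if_neg fun h => hi (Finset.mem_filter.mpr ⟨Finset.mem_univ _, h⟩))
    _ ≤ negLogLik (U₂ᵀ * (X * diagonal a * Xᵀ) * U₂ + σ2 • 1) C₂₂ := by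
        rwa [transpose_mul_mul_eq_mul_mul_transpose, hC₂₂]
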